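/- The configuration Q = {(1,0,0), (-1,0,0), (0,1,0), (0,0,1), (0,0,-1)} on S² is a 5-point best-packing configuration: its minimum pairwise distance equals √2 = δ_5(S²), and exactly 8 of its 10 unordered pairs of points are at distance √2. -/

import Mathlib

open scoped BigOperators
open Filter Metric

/-- Separation distance of an `N`-point configuration. -/
noncomputable def sep {E : Type*} [MetricSpace E] {N : ℕ} (x : Fin N → E) : ℝ :=
  ⨅ p : {p : Fin N × Fin N // p.1 ≠ p.2}, dist (x p.1.1) (x p.1.2)

/-- Mesh norm (covering radius) of a configuration relative to a set `S`. -/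
noncomputable def mesh {E : Type*} [MetricSpace E] {N : ℕ} (S : Set E) (x : Fin N → E) : ℝ :=
  ⨆ y : S, ⨅ i, dist (y : E) (x i)

/-- `N`-point best-packing distance of the set `S`. -/
noncomputable def packDist {E : Type*} [MetricSpace E] (S : Set E) (N : ℕ) : ℝ :=
  ⨆ x : {x : Fin N → E // Function.Injective x ∧ ∀ i, x i ∈ S}, sep x.1

/-- Riesz `s`-energy of a configuration. -/
noncomputable def energy {E : Type*} [MetricSpace E] {N : ℕ} (s : ℝ) (x : Fin N → E) : ℝ :=
  ∑ i, ∑ j ∈ Finset.univ.filter (· ≠ i), dist (x i) (x j) ^ (-s)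

/-- Minimal `N`-point Riesz `s`-energy of the set `S`. -/
noncomputable def minEnergy {E : Type*} [MetricSpace E] (S : Set E) (N : ℕ) (s : ℝ) : ℝ :=
  ⨅ x : {x : Fin N → E // Function.Injective x ∧ ∀ i, x i ∈ S}, energy s x.1

noncomputable def pt (a b c : ℝ) : EuclideanSpace ℝ (Fin 3) :=
  (EuclideanSpace.equiv (Fin 3) ℝ).symm ![a, b, c]

noncomputable def Qconf : Fin 5 → EuclideanSpace ℝ (Fin 3) :=
  ![pt 1 0 0, pt (-1) 0 0, pt 0 1 0, pt 0 0 1, pt 0 0 (-1)]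

/-! Among any five unit vectors in `ℝ³` two make a non-obtuse angle, and so lie at distance at
most `√2`: vectors that pairwise make non-acute angles and all make an obtuse angle with one
further vector are linearly independent, and four vectors in `ℝ³` are not. The configuration
`Qconf` attains `√2`, and its only pairs at distance `2` are the two antipodal ones. -/

open Finset RealInnerProductSpace

section Packing

variable {E : Type*} [MetricSpace E]

lemma sep_le_dist {N : ℕ} (x : Fin N → E) {i j : Fin N} (hij : i ≠ j) :
    sep x ≤ dist (x i) (x j) :=
  ciInf_le ⟨0, Set.forall_mem_range.mpr fun _ => dist_nonneg⟩
    (⟨(i, j), hij⟩ : {p : Fin N × Fin N // p.1 ≠ p.2})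

lemma sep_eq_of_forall_le_of_dist_eq {N : ℕ} {x : Fin N → E} {r : ℝ}
    (hle : ∀ i j, i ≠ j → r ≤ dist (x i) (x j)) {i j : Fin N} (hij : i ≠ j)
    (hr : dist (x i) (x j) = r) : sep x = r := by
  have : Nonempty {p : Fin N × Fin N // p.1 ≠ p.2} := ⟨⟨(i, j), hij⟩⟩
  exact le_antisymm (hr ▸ sep_le_dist x hij) (le_ciInf fun p => hle _ _ p.2)

lemma packDist_eq_of_sep_eq {S : Set E} {N : ℕ} {r : ℝ} {x : Fin N → E}
    (hinj : Function.Injective x) (hS : ∀ i, x i ∈ S) (hx : sep x = r)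
    (hle : ∀ y : Fin N → E, Function.Injective y → (∀ i, y i ∈ S) → sep y ≤ r) :
    packDist S N = r := by
  have : Nonempty {y : Fin N → E // Function.Injective y ∧ ∀ i, y i ∈ S} := ⟨⟨x, hinj, hS⟩⟩
  have hbdd : ∀ y : {y : Fin N → E // Function.Injective y ∧ ∀ i, y i ∈ S}, sep y.1 ≤ r :=
    fun y => hle y.1 y.2.1 y.2.2
  exact le_antisymm (ciSup_le hbdd)
    (hx ▸ le_ciSup ⟨r, Set.forall_mem_range.mpr hbdd⟩ ⟨x, hinj, hS⟩)

end Packing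

section ObtuseFamilies

variable {E : Type*} [NormedAddCommGroup E] [InnerProductSpace ℝ E]

lemma eq_zero_of_sum_smul_eq_zero_of_inner_neg {ι : Type*} [Fintype ι] {w : ι → E} {u : E}
    (hu : ∀ i, ⟪w i, u⟫ < 0) {c : ι → ℝ} (hc : ∀ i, 0 ≤ c i) (hsum : ∑ i, c i • w i = 0) :
    c = 0 := by
  have hterms : ∑ i, c i * ⟪w i, u⟫ = 0 := by
    simp_rw [← real_inner_smul_left, ← sum_inner, hsum, inner_zero_left]
  have hnonpos : ∀ i ∈ univ, c i * ⟪w i, u⟫ ≤ 0 := fun i _ =>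
    mul_nonpos_of_nonneg_of_nonpos (hc i) (hu i).le
  funext i
  have := (sum_eq_zero_iff_of_nonpos hnonpos).mp hterms i (mem_univ i)
  exact (mul_eq_zero.mp this).resolve_right (hu i).ne

/- Split a vanishing combination `∑ gᵢ wᵢ` into parts `x = ∑ gᵢ⁺ wᵢ = ∑ gᵢ⁻ wᵢ`: then
`‖x‖² = ∑ gᵢ⁺ gⱼ⁻ ⟪wᵢ, wⱼ⟫ ≤ 0` because `gᵢ⁺ gᵢ⁻ = 0`, so `x = 0`, and both parts vanish by
testing against `u`. -/
theorem linearIndependent_of_inner_nonpos_of_inner_neg {ι : Type*} [Fintype ι] {w : ι → E}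
    {u : E} (hw : ∀ i j, i ≠ j → ⟪w i, w j⟫ ≤ 0) (hu : ∀ i, ⟪w i, u⟫ < 0) :
    LinearIndependent ℝ w := by
  rw [Fintype.linearIndependent_iff]
  intro g hg
  set x := ∑ i, g⁺ i • w i
  have hx : x = ∑ j, g⁻ j • w j := by
    rw [← sub_eq_zero, ← sum_sub_distrib, ← hg]
    exact sum_congr rfl fun i _ => by rw [← sub_smul, ← Pi.sub_apply, posPart_sub_negPart]
  have hx0 : x = 0 := by
    have hcross : ∀ i j, g⁺ i * (g⁻ j * ⟪w i, w j⟫) ≤ 0 := fun i j => by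
      rcases eq_or_ne i j with rfl | hij
      · rcases le_total (g i) 0 with h | h <;> simp [h]
      · exact mul_nonpos_of_nonneg_of_nonpos (posPart_nonneg _)
          (mul_nonpos_of_nonneg_of_nonpos (negPart_nonneg _) (hw i j hij))
    have hxx : ⟪∑ i, g⁺ i • w i, ∑ j, g⁻ j • w j⟫ ≤ 0 := by
      simp_rw [sum_inner, inner_sum, real_inner_smul_left, real_inner_smul_right]
      exact sum_nonpos fun i _ => sum_nonpos fun j _ => hcross i j
    rw [← hx] at hxx
    exact inner_self_eq_zero.mp (le_antisymm hxx real_inner_self_nonneg)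
  have hpos : g⁺ = 0 :=
    eq_zero_of_sum_smul_eq_zero_of_inner_neg hu (fun i => posPart_nonneg (g i)) hx0
  have hneg : g⁻ = 0 :=
    eq_zero_of_sum_smul_eq_zero_of_inner_neg hu (fun i => negPart_nonneg (g i)) (hx ▸ hx0)
  have : g = 0 := by rw [← posPart_sub_negPart g, hpos, hneg, sub_zero]
  exact congrFun this

theorem exists_ne_inner_nonneg_of_finrank_le {n : ℕ} [FiniteDimensional ℝ E]
    (hE : Module.finrank ℝ E ≤ n) (v : Fin (n + 2) → E) :
    ∃ i j, i ≠ j ∧ 0 ≤ ⟪v i, v j⟫ := by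
  by_contra! hneg
  have hli : LinearIndependent ℝ (v ∘ Fin.castSucc) :=
    linearIndependent_of_inner_nonpos_of_inner_neg (u := v (Fin.last _))
      (fun i j hij => (hneg _ _ (Fin.castSucc_injective _ |>.ne hij)).le)
      (fun i => hneg _ _ (Fin.castSucc_lt_last i).ne)
  have := hli.fintype_card_le_finrank
  simp only [Fintype.card_fin] at this
  omega

lemma dist_le_sqrt_two_of_inner_nonneg {x y : E} (hx : ‖x‖ = 1) (hy : ‖y‖ = 1)
    (hxy : 0 ≤ ⟪x, y⟫) : dist x y ≤ √2 := by
  rw [dist_eq_norm, ← Real.sqrt_sq (norm_nonneg _)]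
  apply Real.sqrt_le_sqrt
  rw [norm_sub_sq_real, hx, hy]
  linarith

theorem sep_le_sqrt_two_of_finrank_le {n : ℕ} [FiniteDimensional ℝ E]
    (hE : Module.finrank ℝ E ≤ n) {x : Fin (n + 2) → E} (hx : ∀ i, x i ∈ sphere (0 : E) 1) :
    sep x ≤ √2 := by
  obtain ⟨i, j, hij, hinner⟩ := exists_ne_inner_nonneg_of_finrank_le hE x
  refine (sep_le_dist x hij).trans (dist_le_sqrt_two_of_inner_nonneg ?_ ?_ hinner)
  · simpa using hx i
  · simpa using hx j

end ObtuseFamilies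

lemma sqrt_two_lt_two : √2 < 2 := (Real.sqrt_lt' two_pos).mpr (by norm_num)

lemma dist_pt (a b c d e f : ℝ) :
    dist (pt a b c) (pt d e f) = √((a - d) ^ 2 + (b - e) ^ 2 + (c - f) ^ 2) := by
  simp [EuclideanSpace.dist_eq, pt, Fin.sum_univ_three, Real.dist_eq, sq_abs]

lemma norm_pt (a b c : ℝ) : ‖pt a b c‖ = √(a ^ 2 + b ^ 2 + c ^ 2) := by
  simp [EuclideanSpace.norm_eq, pt, Fin.sum_univ_three, sq_abs]

lemma dist_Qconf (i j : Fin 5) : dist (Qconf i) (Qconf j) =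
    if i = j then 0
    else if s(i, j) ∈ ({s(0, 1), s(3, 4)} : Finset (Sym2 (Fin 5))) then 2 else √2 := by
  fin_cases i <;> fin_cases j <;> simp +decide [Qconf, dist_pt] <;> norm_num

lemma sqrt_two_le_dist_Qconf {i j : Fin 5} (hij : i ≠ j) : √2 ≤ dist (Qconf i) (Qconf j) := by
  rw [dist_Qconf, if_neg hij]
  split_ifs <;> linarith [sqrt_two_lt_two]

lemma sep_Qconf : sep Qconf = √2 :=
  sep_eq_of_forall_le_of_dist_eq (fun _ _ => sqrt_two_le_dist_Qconf) (i := 0) (j := 2)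
    (by decide) (by simp +decide [dist_Qconf])

lemma Qconf_injective : Function.Injective Qconf := fun i j h => by
  by_contra hij
  have := sqrt_two_le_dist_Qconf hij
  rw [h, dist_self] at this
  linarith [Real.sqrt_pos.mpr (two_pos (α := ℝ))]

lemma Qconf_mem_sphere (i : Fin 5) : Qconf i ∈ sphere (0 : EuclideanSpace ℝ (Fin 3)) 1 := by
  rw [mem_sphere_zero_iff_norm]
  fin_cases i <;> simp [Qconf, norm_pt]

lemma packDist_sphere_five : packDist (sphere (0 : EuclideanSpace ℝ (Fin 3)) 1) 5 = √2 :=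
  packDist_eq_of_sep_eq Qconf_injective Qconf_mem_sphere sep_Qconf
    fun _ _ => sep_le_sqrt_two_of_finrank_le (finrank_euclideanSpace_fin (𝕜 := ℝ)).le

lemma card_pairs_Qconf_dist_eq_sqrt_two :
    (Finset.univ.filter fun p : Sym2 (Fin 5) => ¬ p.IsDiag ∧
      Sym2.lift ⟨fun i j => dist (Qconf i) (Qconf j), fun _ _ => dist_comm _ _⟩ p
        = √2).card = 8 := by
  have h2 : (2 : ℝ) ≠ √2 := sqrt_two_lt_two.ne'
  have h0 : (0 : ℝ) ≠ √2 := (Real.sqrt_pos.mpr two_pos).ne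
  have hfilter : (Finset.univ.filter fun p : Sym2 (Fin 5) => ¬ p.IsDiag ∧
      Sym2.lift ⟨fun i j => dist (Qconf i) (Qconf j), fun _ _ => dist_comm _ _⟩ p = √2) =
      Finset.univ.filter fun p => ¬ p.IsDiag ∧
        p ∉ ({s(0, 1), s(3, 4)} : Finset (Sym2 (Fin 5))) := by
    ext p
    induction p using Sym2.ind with
    | _ i j =>
      simp only [mem_filter, mem_univ, true_and, Sym2.lift_mk, Sym2.mk_isDiag_iff, dist_Qconf]
      split_ifs <;> simp_all
  rw [hfilter]
  decide

theorem stmt_12 :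
    sep Qconf = Real.sqrt 2 ∧
    packDist (Metric.sphere (0 : EuclideanSpace ℝ (Fin 3)) 1) 5 = Real.sqrt 2 ∧
    (Finset.univ.filter fun p : Sym2 (Fin 5) => ¬ p.IsDiag ∧
      Sym2.lift ⟨fun i j => dist (Qconf i) (Qconf j), fun i j => dist_comm _ _⟩ p
        = Real.sqrt 2).card = 8 :=
  ⟨sep_Qconf, packDist_sphere_five, card_pairs_Qconf_dist_eq_sqrt_two⟩
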